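/- Define the 2×2-matrix-coefficient polynomials f(X) = diag(X₁X₁, X₁X₁ − X₂X₂) and g(X) = diag(X₁X₁ − X₂X₂, X₁X₁) for tuples (X₁, X₂) of real symmetric n×n matrices, and the linear map φ₂ : ℝ^{2×2} → ℝ^{2×2}, φ₂([[a,b],[c,d]]) = [[d,0],[0,a]]. Then: (i) φ₂ is completely positive; (ii) f(X) − (φ₂ ⊗ 1_n) g(X) = 0 for every n ∈ ℕ⁺ and all real symmetric n×n matrices X₁, X₂, where (φ₂ ⊗ 1_n) g(X) = Σ_{i,j} φ₂(B_{ij}) ⊗ X_i X_j for the coefficients B_{ij} of g; (iii) nevertheless, for the scalar point X⁰ = (1, 2) ∈ ℝ² and the vector v = (0,1)ᵀ ∈ ℝ², vᵀ g(X⁰) v = 1 > 0 while vᵀ f(X⁰) v = −3 < 0. -/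

import Mathlib

open Matrix Kronecker

/-- The extension `φ ⊗ 1ₙ` of a linear map `φ : ℝ^{2×2} → ℝ^{2×2}` to
`ℝ^{(2n)×(2n)}`, determined by `(φ ⊗ 1ₙ)(S ⊗ T) = φ(S) ⊗ T`. -/
def kronExt (φ : Matrix (Fin 2) (Fin 2) ℝ →ₗ[ℝ] Matrix (Fin 2) (Fin 2) ℝ) (n : ℕ)
    (M : Matrix (Fin 2 × Fin n) (Fin 2 × Fin n) ℝ) : Matrix (Fin 2 × Fin n) (Fin 2 × Fin n) ℝ :=
  Matrix.of fun p r => φ (Matrix.of fun a c => M (a, p.2) (c, r.2)) p.1 r.1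

/-- Complete positivity of a linear map `φ : ℝ^{2×2} → ℝ^{2×2}`. -/
def IsCompletelyPositive (φ : Matrix (Fin 2) (Fin 2) ℝ →ₗ[ℝ] Matrix (Fin 2) (Fin 2) ℝ) : Prop :=
  ∀ (n : ℕ), 0 < n → ∀ M : Matrix (Fin 2 × Fin n) (Fin 2 × Fin n) ℝ,
    M.PosSemidef → (kronExt φ n M).PosSemidef

/-- The linear map `φ₂ : ℝ^{2×2} → ℝ^{2×2}`, `[[a,b],[c,d]] ↦ [[d,0],[0,a]]`. -/
def phi2 : Matrix (Fin 2) (Fin 2) ℝ →ₗ[ℝ] Matrix (Fin 2) (Fin 2) ℝ where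
  toFun M := Matrix.of ![![M 1 1, 0], ![0, M 0 0]]
  map_add' M N := by
    ext i j
    fin_cases i <;> fin_cases j <;> simp [Matrix.add_apply]
  map_smul' c M := by
    ext i j
    fin_cases i <;> fin_cases j <;> simp [Matrix.smul_apply]

/-- Coefficients of `f(X) = diag(X₁X₁, X₁X₁ - X₂X₂)`:
`A 0 0 = Id`, `A 1 1 = [[0,0],[0,-1]]`, `A 0 1 = A 1 0 = 0`. -/
def Acoef : Fin 2 → Fin 2 → Matrix (Fin 2) (Fin 2) ℝ :=
  ![![1, 0], ![0, !![0, 0; 0, -1]]]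

/-- Coefficients of `g(X) = diag(X₁X₁ - X₂X₂, X₁X₁)`:
`B 0 0 = Id`, `B 1 1 = [[-1,0],[0,0]]`, `B 0 1 = B 1 0 = 0`. -/
def Bcoef : Fin 2 → Fin 2 → Matrix (Fin 2) (Fin 2) ℝ :=
  ![![1, 0], ![0, !![-1, 0; 0, 0]]]

/-- **Example 6.2.** `φ₂` is completely positive, `f(X) - (φ₂ ⊗ 1ₙ) g(X) = 0` at every
symmetric tuple, yet for the scalar point `X⁰ = (1, 2)` and `v = (0,1)ᵀ` one has
`vᵀ g(X⁰) v = 1 > 0` whereas `vᵀ f(X⁰) v = -3 < 0`. -/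
theorem stmt_14 :
    IsCompletelyPositive phi2 ∧
    (∀ (n : ℕ), 0 < n → ∀ X : Fin 2 → Matrix (Fin n) (Fin n) ℝ, (∀ i, (X i).IsSymm) →
      (∑ i, ∑ j, Acoef i j ⊗ₖ (X i * X j)) -
        (∑ i, ∑ j, (phi2 (Bcoef i j)) ⊗ₖ (X i * X j)) = 0) ∧
    (∀ X0 : Fin 2 → Matrix (Fin 1) (Fin 1) ℝ, X0 0 = !![1] → X0 1 = !![2] →
      ∀ v : Fin 2 × Fin 1 → ℝ, v = (fun p => if p.1 = 1 then 1 else 0) →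
        v ⬝ᵥ (∑ i, ∑ j, Bcoef i j ⊗ₖ (X0 i * X0 j)).mulVec v = 1 ∧
        (0 : ℝ) < 1 ∧
        v ⬝ᵥ (∑ i, ∑ j, Acoef i j ⊗ₖ (X0 i * X0 j)).mulVec v = -3 ∧
        (-3 : ℝ) < 0) := by
  refine ⟨?_, ?_, ?_⟩
  · -- complete positivity of φ₂
    intro n _ M hM
    have h2 : ∀ p r, M r p = M p r := by
      intro p r
      conv_lhs => rw [← hM.1]
      simp [Matrix.conjTranspose_apply]
    refine Matrix.PosSemidef.of_dotProduct_mulVec_nonneg ?_ ?_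
    · ext ⟨a, k⟩ ⟨c, l⟩
      fin_cases a <;> fin_cases c <;>
        simp [kronExt, phi2, Matrix.conjTranspose_apply, h2]
    · intro x
      have key : dotProduct (star x) ((kronExt phi2 n M) *ᵥ x) =
          dotProduct (star (fun p : Fin 2 × Fin n => if p.1 = 1 then x (0, p.2) else 0))
            (M *ᵥ (fun p : Fin 2 × Fin n => if p.1 = 1 then x (0, p.2) else 0)) +
          dotProduct (star (fun p : Fin 2 × Fin n => if p.1 = 0 then x (1, p.2) else 0))
            (M *ᵥ (fun p : Fin 2 × Fin n => if p.1 = 0 then x (1, p.2) else 0)) := by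
        simp only [dotProduct, Matrix.mulVec, Fintype.sum_prod_type, Fin.sum_univ_two,
          kronExt, phi2, Matrix.of_apply, star_trivial]
        simp [Finset.mul_sum, Finset.sum_add_distrib]
      rw [key]
      exact add_nonneg (hM.dotProduct_mulVec_nonneg _) (hM.dotProduct_mulVec_nonneg _)
  · -- f(X) = (φ₂ ⊗ 1ₙ) g(X)
    intro n _ X _
    have hAB : ∀ i j : Fin 2, Acoef i j = phi2 (Bcoef i j) := by
      intro i j
      fin_cases i <;> fin_cases j <;> ext a b <;> fin_cases a <;> fin_cases b <;>
        simp [Acoef, Bcoef, phi2, Matrix.one_apply]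
    simp only [hAB, sub_self]
  · -- evaluation at the scalar point
    intro X0 h0 h1 v hv
    subst hv
    refine ⟨?_, by norm_num, ?_, by norm_num⟩ <;>
    · simp [Bcoef, Acoef, h0, h1, dotProduct, Matrix.mulVec, Fintype.sum_prod_type,
        Fin.sum_univ_two, Matrix.kroneckerMap_apply, Matrix.one_apply, Matrix.mul_apply] <;>
      norm_num
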